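/- Let ψ₀(t) = 8t(t²−1)/(t²+1)³, η₀(t) = log(1+t²), ζ₀(t) = 1/(t²+1), θ₀(t) = ∫_{t²}^∞ log(s+1)/(s(s+1)) ds. Then ∫₀^∞ ψ₀ζ₀θ₀ dt = −61/54, ∫₀^∞ ψ₀ζ₀²θ₀ dt = −223/216, ∫₀^∞ ψ₀η₀²θ₀ dt = 11 − 8ζ(3), and ∫₀^∞ ψ₀η₀ζ₀θ₀ dt = (4/3)ζ(3) − 179/108, where ζ denotes the Riemann zeta function. -/

import Mathlib

/-!
Write `g s = log (s + 1) / (s * (s + 1))`, so that `θ₀ t = ∫_{t²}^∞ g`. If `Φ' = F` and `Φ 0 = 0`,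
Fubini gives `∫₀^∞ F θ₀ = ∫₀^∞ g(s) Φ(√s) ds`. Since `ψ₀ = 8tζ₀²(1 - 2ζ₀)`, `ζ₀' = -2tζ₀²` and
`η₀' = 2tζ₀`, each of the four integrands has an antiderivative that is a polynomial in `ζ₀` and
`η₀`; at `t = √s` these become `1/(s+1)` and `log(s+1)`, so `g(s) Φ(√s)` is a rational combination
of `log(s+1)^k/(s+1)^(m+2)` and `log(s+1)²/(s(s+1))`. The substitution `s = eᵘ - 1` turns the
former into the Gamma integral `k!/(m+1)^(k+1)`, and expanding `1/(s(s+1)) = ∑ₙ (s+1)^-(n+2)`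
gives `∫₀^∞ log(s+1)^k/(s(s+1)) ds = k! ζ(k+1)`.
-/

open MeasureTheory Real

noncomputable def psi0 (t : ℝ) : ℝ := 8 * t * (t ^ 2 - 1) / (t ^ 2 + 1) ^ 3
noncomputable def eta0 (t : ℝ) : ℝ := Real.log (1 + t ^ 2)
noncomputable def zeta0 (t : ℝ) : ℝ := 1 / (t ^ 2 + 1)
noncomputable def theta0 (t : ℝ) : ℝ :=
  ∫ s in Set.Ioi (t ^ 2), Real.log (s + 1) / (s * (s + 1))

/-- `ζ(3) = ∑_{n ≥ 1} 1/n³`. -/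
noncomputable def zeta3 : ℝ := ∑' n : ℕ, 1 / ((n : ℝ) + 1) ^ 3

open Set
open scoped Nat

def HasIntegralIoi (f : ℝ → ℝ) (a : ℝ) : Prop :=
  IntegrableOn f (Ioi 0) ∧ ∫ x in Ioi 0, f x = a

namespace HasIntegralIoi

variable {f g : ℝ → ℝ} {a b : ℝ}

lemma add (hf : HasIntegralIoi f a) (hg : HasIntegralIoi g b) :
    HasIntegralIoi (fun x => f x + g x) (a + b) :=
  ⟨hf.1.add hg.1, by rw [integral_add hf.1 hg.1, hf.2, hg.2]⟩

lemma const_mul (hf : HasIntegralIoi f a) (c : ℝ) :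
    HasIntegralIoi (fun x => c * f x) (c * a) :=
  ⟨hf.1.const_mul c, by rw [integral_const_mul, hf.2]⟩

lemma congr (hf : HasIntegralIoi f a) (hfg : EqOn f g (Ioi 0)) (hab : a = b) :
    HasIntegralIoi g b :=
  ⟨hf.1.congr_fun hfg measurableSet_Ioi,
    by rw [← setIntegral_congr_fun measurableSet_Ioi hfg, hf.2, hab]⟩

end HasIntegralIoi

lemma hasIntegralIoi_pow_mul_exp_neg_mul (k : ℕ) {c : ℝ} (hc : 0 < c) :
    HasIntegralIoi (fun u => u ^ k * exp (-(c * u))) (k ! / c ^ (k + 1)) := by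
  have hk : (0 : ℝ) < k + 1 := by positivity
  have hrpow : EqOn (fun u : ℝ => u ^ ((k : ℝ) + 1 - 1) * exp (-(c * u)))
      (fun u => u ^ k * exp (-(c * u))) (Ioi 0) := fun u _ => by
    simp only [add_sub_cancel_right, rpow_natCast]
  refine ⟨?_, ?_⟩
  · refine (integrableOn_rpow_mul_exp_neg_mul_rpow (s := k) (p := 1) (by linarith) one_pos
      hc).congr_fun (fun u _ => ?_) measurableSet_Ioi
    simp only [rpow_natCast, rpow_one, neg_mul]
  · rw [← setIntegral_congr_fun measurableSet_Ioi hrpow, integral_rpow_mul_exp_neg_mul_Ioi hk hc,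
      Gamma_nat_eq_factorial, ← Nat.cast_succ, rpow_natCast, one_div_pow, Nat.succ_eq_add_one]
    ring

lemma hasIntegralIoi_of_comp_exp_sub_one {g : ℝ → ℝ} {a : ℝ}
    (hg : HasIntegralIoi (fun u => exp u * g (exp u - 1)) a) : HasIntegralIoi g a := by
  have hderiv : ∀ u ∈ Ioi (0 : ℝ), HasDerivWithinAt (fun u => exp u - 1) (exp u) (Ioi 0) u :=
    fun u _ => ((hasDerivAt_exp u).sub_const 1).hasDerivWithinAt
  have hinj : InjOn (fun u => exp u - 1) (Ioi 0) := fun u _ v _ h => by simpa using h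
  have himage : (fun u => exp u - 1) '' Ioi 0 = Ioi 0 := by
    ext s
    refine ⟨?_, fun (hs : 0 < s) => ⟨log (s + 1), log_pos (by linarith), ?_⟩⟩
    · rintro ⟨u, hu, rfl⟩
      simpa using hu
    · dsimp only
      rw [exp_log (by linarith)]
      ring
  have habs : ∀ u, |exp u| = exp u := fun u => abs_of_pos (exp_pos u)
  constructor
  · rw [← himage,
      integrableOn_image_iff_integrableOn_abs_deriv_smul measurableSet_Ioi hderiv hinj]
    simpa only [habs, smul_eq_mul] using hg.1
  · rw [← himage, integral_image_eq_integral_abs_deriv_smul measurableSet_Ioi hderiv hinj]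
    simpa only [habs, smul_eq_mul] using hg.2

lemma hasIntegralIoi_log_pow_div_pow (k m : ℕ) :
    HasIntegralIoi (fun s => log (s + 1) ^ k / (s + 1) ^ (m + 2))
      (k ! / ((m : ℝ) + 1) ^ (k + 1)) := by
  refine hasIntegralIoi_of_comp_exp_sub_one
    ((hasIntegralIoi_pow_mul_exp_neg_mul k (c := m + 1) (by positivity)).congr (fun u _ => ?_) rfl)
  have hexp : exp (-((m + 1) * u)) = exp u * (exp u ^ (m + 2))⁻¹ := by
    rw [← exp_nat_mul, ← exp_neg, ← exp_add]
    push_cast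
    ring_nf
  simp only [sub_add_cancel, log_exp, hexp]
  ring

lemma tsum_log_pow_div_pow (k : ℕ) {s : ℝ} (hs : 0 < s) :
    ∑' n : ℕ, log (s + 1) ^ k / (s + 1) ^ (n + 2) = log (s + 1) ^ k / (s * (s + 1)) := by
  have hterm : ∀ n : ℕ, log (s + 1) ^ k / (s + 1) ^ (n + 2) =
      log (s + 1) ^ k / (s + 1) ^ 2 * ((s + 1)⁻¹) ^ n := by
    intro n
    rw [pow_add, inv_pow]
    field_simp
  have hratio : 1 - (s + 1)⁻¹ = s / (s + 1) := by
    field_simp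
    ring
  rw [tsum_congr hterm, tsum_mul_left,
    tsum_geometric_of_lt_one (by positivity) (inv_lt_one_of_one_lt₀ (by linarith)), hratio]
  field_simp

lemma hasIntegralIoi_log_pow_div_mul {k : ℕ} (hk : 1 ≤ k) :
    HasIntegralIoi (fun s => log (s + 1) ^ k / (s * (s + 1)))
      (k ! * ∑' n : ℕ, 1 / ((n : ℝ) + 1) ^ (k + 1)) := by
  have hterm (n : ℕ) := hasIntegralIoi_log_pow_div_pow k n
  have hsummable : Summable (fun n : ℕ => 1 / ((n : ℝ) + 1) ^ (k + 1)) := by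
    simpa using (summable_nat_add_iff 1).mpr (summable_one_div_nat_pow.mpr (by omega : 1 < k + 1))
  have hnorm (n : ℕ) : ∫ s in Ioi 0, ‖log (s + 1) ^ k / (s + 1) ^ (n + 2)‖ =
      k ! * (1 / ((n : ℝ) + 1) ^ (k + 1)) := by
    rw [mul_one_div, ← (hterm n).2]
    refine setIntegral_congr_fun measurableSet_Ioi fun s (hs : 0 < s) => ?_
    have : 0 ≤ log (s + 1) := log_nonneg (by linarith)
    exact norm_of_nonneg (by positivity)
  have hvalue : ∫ s in Ioi 0, log (s + 1) ^ k / (s * (s + 1)) =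
      k ! * ∑' n : ℕ, 1 / ((n : ℝ) + 1) ^ (k + 1) := by
    rw [← setIntegral_congr_fun measurableSet_Ioi fun s hs => tsum_log_pow_div_pow k hs,
      ← integral_tsum_of_summable_integral_norm (fun n => (hterm n).1)
        (by simpa only [hnorm] using hsummable.mul_left _),
      ← tsum_mul_left]
    exact tsum_congr fun n => by rw [(hterm n).2, mul_one_div]
  have hpos : 0 < (k ! : ℝ) * ∑' n : ℕ, 1 / ((n : ℝ) + 1) ^ (k + 1) :=
    mul_pos (by positivity) (hsummable.tsum_pos (fun n => by positivity) 0 (by norm_num))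
  -- a non-integrable function has Bochner integral `0`
  exact ⟨Integrable.of_integral_ne_zero (hvalue ▸ hpos.ne'), hvalue⟩

lemma integral_mul_integral_Ioi_sq {F Φ g : ℝ → ℝ} (hF : IntegrableOn F (Ioi 0))
    (hg : IntegrableOn g (Ioi 0)) (hΦ : ∀ t, HasDerivAt Φ (F t) t) (hΦ0 : Φ 0 = 0) :
    ∫ t in Ioi 0, F t * ∫ s in Ioi (t ^ 2), g s = ∫ s in Ioi 0, g s * Φ (√s) := by
  set S : Set (ℝ × ℝ) := {p | p.1 ^ 2 < p.2}
  have hS : MeasurableSet S := measurableSet_lt (measurable_fst.pow_const 2) measurable_snd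
  have hinner (t : ℝ) (_ : t ∈ Ioi 0) : F t * ∫ s in Ioi (t ^ 2), g s =
      ∫ s in Ioi 0, S.indicator (fun p => F p.1 * g p.2) (t, s) := by
    have hsub : Ioi (t ^ 2) ⊆ Ioi 0 := Ioi_subset_Ioi (sq_nonneg t)
    rw [← integral_const_mul, ← inter_eq_self_of_subset_right hsub,
      ← setIntegral_indicator measurableSet_Ioi]
    refine integral_congr_ae (ae_of_all _ fun s => ?_)
    by_cases hs : t ^ 2 < s <;> simp [S, hs]
  have hprod : Integrable (Function.uncurry fun t s => S.indicator (fun p => F p.1 * g p.2) (t, s))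
      ((volume.restrict (Ioi 0)).prod (volume.restrict (Ioi 0))) :=
    (hF.mul_prod hg).indicator hS
  rw [setIntegral_congr_fun measurableSet_Ioi hinner, integral_integral_swap hprod]
  refine setIntegral_congr_fun measurableSet_Ioi fun s (hs : 0 < s) => ?_
  have hslice : EqOn (fun t => S.indicator (fun p => F p.1 * g p.2) (t, s))
      ((Iio √s).indicator fun t => g s * F t) (Ioi 0) := fun t (ht : 0 < t) => by
    have hiff : t ^ 2 < s ↔ t < √s := (lt_sqrt ht.le).symm
    by_cases hts : t ^ 2 < s
    · simp [S, hts, hiff.mp hts, mul_comm]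
    · simp [S, hts, mt hiff.mpr hts]
  rw [setIntegral_congr_fun measurableSet_Ioi hslice, setIntegral_indicator measurableSet_Iio,
    Ioi_inter_Iio, integral_const_mul, ← integral_Ioc_eq_integral_Ioo,
    ← intervalIntegral.integral_of_le (sqrt_nonneg s),
    intervalIntegral.integral_eq_sub_of_hasDerivAt (fun t _ => hΦ t)
      ((intervalIntegrable_iff_integrableOn_Ioc_of_le (sqrt_nonneg s)).mpr
        (hF.mono_set Ioc_subset_Ioi_self)), hΦ0, sub_zero]

lemma zeta0_pos (t : ℝ) : 0 < zeta0 t := by unfold zeta0; positivity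

lemma zeta0_le_one (t : ℝ) : zeta0 t ≤ 1 := by
  unfold zeta0
  rw [div_le_one (by positivity)]
  nlinarith [sq_nonneg t]

lemma eta0_nonneg (t : ℝ) : 0 ≤ eta0 t := log_nonneg (by nlinarith [sq_nonneg t])

lemma psi0_eq (t : ℝ) : psi0 t = 8 * t * zeta0 t ^ 2 * (1 - 2 * zeta0 t) := by
  unfold psi0 zeta0
  field_simp
  ring

lemma abs_psi0_le {t : ℝ} (ht : 0 ≤ t) : |psi0 t| ≤ 8 * t * zeta0 t ^ 2 := by
  have h0 := zeta0_pos t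
  have h1 := zeta0_le_one t
  have h2 : |1 - 2 * zeta0 t| ≤ 1 := abs_le.mpr ⟨by linarith, by linarith⟩
  rw [psi0_eq, abs_mul, abs_of_nonneg (by positivity)]
  exact mul_le_of_le_one_right (by positivity) h2

lemma hasDerivAt_zeta0 (t : ℝ) : HasDerivAt zeta0 (-2 * t * zeta0 t ^ 2) t := by
  have h := ((hasDerivAt_pow 2 t).add_const 1).inv (by positivity : t ^ 2 + 1 ≠ 0)
  have hzeta0 : zeta0 = fun t => (t ^ 2 + 1)⁻¹ := funext fun t => one_div _
  rw [hzeta0]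
  refine h.congr_deriv ?_
  field_simp
  ring

lemma hasDerivAt_eta0 (t : ℝ) : HasDerivAt eta0 (2 * t * zeta0 t) t := by
  refine (((hasDerivAt_pow 2 t).const_add 1).log (by positivity : 1 + t ^ 2 ≠ 0)).congr_deriv ?_
  rw [zeta0]
  field_simp
  ring

lemma zeta0_sqrt {s : ℝ} (hs : 0 ≤ s) : zeta0 √s = (s + 1)⁻¹ := by
  rw [zeta0, sq_sqrt hs, one_div]

lemma eta0_sqrt {s : ℝ} (hs : 0 ≤ s) : eta0 √s = log (s + 1) := by
  rw [eta0, sq_sqrt hs, add_comm]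

lemma measurable_psi0 : Measurable psi0 := by unfold psi0; fun_prop
lemma measurable_zeta0 : Measurable zeta0 := by unfold zeta0; fun_prop
lemma measurable_eta0 : Measurable eta0 := by unfold eta0; fun_prop

lemma integrableOn_mul_eta0_pow_mul_zeta0_sq (k : ℕ) :
    IntegrableOn (fun t => t * eta0 t ^ k * zeta0 t ^ 2) (Ioi 0) := by
  refine ((integrableOn_Ioi_comp_rpow_iff' _ two_ne_zero).mpr
    (hasIntegralIoi_log_pow_div_pow k 0).1).congr_fun (fun t _ => ?_) measurableSet_Ioi
  norm_num [eta0, zeta0, add_comm]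
  ring

lemma integrableOn_psi0_mul {G : ℝ → ℝ} (k : ℕ) (hG : Measurable G)
    (hGle : ∀ t, 0 < t → |G t| ≤ eta0 t ^ k) :
    IntegrableOn (fun t => psi0 t * G t) (Ioi 0) := by
  refine ((integrableOn_mul_eta0_pow_mul_zeta0_sq k).const_mul 8).mono'
    (measurable_psi0.mul hG).aestronglyMeasurable ?_
  filter_upwards [self_mem_ae_restrict measurableSet_Ioi] with t (ht : 0 < t)
  rw [norm_mul, norm_eq_abs, norm_eq_abs]
  calc |psi0 t| * |G t| ≤ 8 * t * zeta0 t ^ 2 * eta0 t ^ k :=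
        mul_le_mul (abs_psi0_le ht.le) (hGle t ht) (abs_nonneg _) (by positivity)
    _ = 8 * (t * eta0 t ^ k * zeta0 t ^ 2) := by ring

lemma integral_mul_theta0_eq {F Φ : ℝ → ℝ} {a : ℝ} (hF : IntegrableOn F (Ioi 0))
    (hΦ : ∀ t, HasDerivAt Φ (F t) t) (hΦ0 : Φ 0 = 0)
    (h : HasIntegralIoi (fun s => log (s + 1) / (s * (s + 1)) * Φ √s) a) :
    ∫ t in Ioi 0, F t * theta0 t = a := by
  have hg := (hasIntegralIoi_log_pow_div_mul le_rfl).1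
  rw [← h.2]
  exact integral_mul_integral_Ioi_sq hF (by simpa using hg) hΦ hΦ0

lemma integral_psi0_mul_zeta0_mul_theta0 :
    ∫ t in Ioi 0, psi0 t * zeta0 t * theta0 t = -61 / 54 := by
  have hΦ (t : ℝ) : HasDerivAt (fun t => -2 * zeta0 t ^ 2 + 8 / 3 * zeta0 t ^ 3 - 2 / 3)
      (psi0 t * zeta0 t) t := by
    have hζ := hasDerivAt_zeta0 t
    refine (hζ.fun_pow 2 |>.const_mul (-2) |>.add (hζ.fun_pow 3 |>.const_mul (8 / 3))
      |>.sub_const (2 / 3)).congr_deriv ?_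
    rw [psi0_eq]
    ring
  refine integral_mul_theta0_eq (integrableOn_psi0_mul 0 measurable_zeta0 fun t _ => ?_) hΦ
    (by norm_num [zeta0])
    (hasIntegralIoi_log_pow_div_pow 1 2 |>.const_mul (-8 / 3)
      |>.add (hasIntegralIoi_log_pow_div_pow 1 1 |>.const_mul (-2 / 3))
      |>.add (hasIntegralIoi_log_pow_div_pow 1 0 |>.const_mul (-2 / 3))
      |>.congr (fun s (hs : 0 < s) => ?_) (by norm_num))
  · rw [pow_zero, abs_of_pos (zeta0_pos t)]
    exact zeta0_le_one t
  · rw [zeta0_sqrt hs.le]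
    field_simp
    ring

lemma integral_psi0_mul_zeta0_sq_mul_theta0 :
    ∫ t in Ioi 0, psi0 t * zeta0 t ^ 2 * theta0 t = -223 / 216 := by
  have hΦ (t : ℝ) : HasDerivAt (fun t => -4 / 3 * zeta0 t ^ 3 + 2 * zeta0 t ^ 4 - 2 / 3)
      (psi0 t * zeta0 t ^ 2) t := by
    have hζ := hasDerivAt_zeta0 t
    refine (hζ.fun_pow 3 |>.const_mul (-4 / 3) |>.add (hζ.fun_pow 4 |>.const_mul 2)
      |>.sub_const (2 / 3)).congr_deriv ?_
    rw [psi0_eq]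
    ring
  refine integral_mul_theta0_eq
    (integrableOn_psi0_mul 0 (measurable_zeta0.pow_const 2) fun t _ => ?_) hΦ
    (by norm_num [zeta0])
    (hasIntegralIoi_log_pow_div_pow 1 3 |>.const_mul (-2)
      |>.add (hasIntegralIoi_log_pow_div_pow 1 2 |>.const_mul (-2 / 3))
      |>.add (hasIntegralIoi_log_pow_div_pow 1 1 |>.const_mul (-2 / 3))
      |>.add (hasIntegralIoi_log_pow_div_pow 1 0 |>.const_mul (-2 / 3))
      |>.congr (fun s (hs : 0 < s) => ?_) (by norm_num))
  · rw [pow_zero, abs_of_pos (by positivity [zeta0_pos t])]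
    exact pow_le_one₀ (zeta0_pos t).le (zeta0_le_one t)
  · rw [zeta0_sqrt hs.le]
    field_simp
    ring

lemma integral_psi0_mul_eta0_sq_mul_theta0 :
    ∫ t in Ioi 0, psi0 t * eta0 t ^ 2 * theta0 t = 11 - 8 * zeta3 := by
  have hΦ (t : ℝ) : HasDerivAt (fun t => 4 * zeta0 t ^ 2 * (eta0 t ^ 2 + eta0 t + 1 / 2)
      - 4 * zeta0 t * (eta0 t ^ 2 + 2 * eta0 t + 2) + 6) (psi0 t * eta0 t ^ 2) t := by
    have hζ := hasDerivAt_zeta0 t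
    have hη := hasDerivAt_eta0 t
    refine (hζ.fun_pow 2 |>.const_mul 4 |>.mul (hη.fun_pow 2 |>.fun_add hη |>.add_const (1 / 2))
      |>.sub (hζ.const_mul 4 |>.mul (hη.fun_pow 2 |>.fun_add (hη.const_mul 2) |>.add_const 2))
      |>.add_const 6).congr_deriv ?_
    rw [psi0_eq]
    ring
  refine integral_mul_theta0_eq
    (integrableOn_psi0_mul 2 (measurable_eta0.pow_const 2) fun t _ => ?_) hΦ
    (by norm_num [zeta0, eta0])
    (hasIntegralIoi_log_pow_div_pow 3 1 |>.const_mul (-4)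
      |>.add (hasIntegralIoi_log_pow_div_pow 2 1 |>.const_mul (-4))
      |>.add (hasIntegralIoi_log_pow_div_pow 2 0 |>.const_mul 4)
      |>.add (hasIntegralIoi_log_pow_div_pow 1 1 |>.const_mul (-2))
      |>.add (hasIntegralIoi_log_pow_div_pow 1 0 |>.const_mul 6)
      |>.add (hasIntegralIoi_log_pow_div_mul one_le_two |>.const_mul (-4))
      |>.congr (fun s (hs : 0 < s) => ?_) (by norm_num [zeta3]; ring))
  · exact (abs_of_nonneg (by positivity)).le
  · rw [zeta0_sqrt hs.le, eta0_sqrt hs.le]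
    field_simp
    ring

lemma integral_psi0_mul_eta0_mul_zeta0_mul_theta0 :
    ∫ t in Ioi 0, psi0 t * eta0 t * zeta0 t * theta0 t = 4 / 3 * zeta3 - 179 / 108 := by
  have hΦ (t : ℝ) : HasDerivAt (fun t => -2 * zeta0 t ^ 2 * eta0 t - zeta0 t ^ 2
      + 8 / 3 * zeta0 t ^ 3 * eta0 t + 8 / 9 * zeta0 t ^ 3 + 1 / 9)
      (psi0 t * eta0 t * zeta0 t) t := by
    have hζ := hasDerivAt_zeta0 t
    have hη := hasDerivAt_eta0 t
    refine (hζ.fun_pow 2 |>.const_mul (-2) |>.mul hη |>.sub (hζ.fun_pow 2)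
      |>.add (hζ.fun_pow 3 |>.const_mul (8 / 3) |>.mul hη)
      |>.add (hζ.fun_pow 3 |>.const_mul (8 / 9)) |>.add_const (1 / 9)).congr_deriv ?_
    rw [psi0_eq]
    ring
  have hF : IntegrableOn (fun t => psi0 t * eta0 t * zeta0 t) (Ioi 0) := by
    simpa only [mul_assoc] using integrableOn_psi0_mul (G := fun t => eta0 t * zeta0 t) 1
      (measurable_eta0.mul measurable_zeta0) fun t _ => by
        rw [pow_one, abs_of_nonneg (mul_nonneg (eta0_nonneg t) (zeta0_pos t).le)]
        exact mul_le_of_le_one_right (eta0_nonneg t) (zeta0_le_one t)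
  refine integral_mul_theta0_eq hF hΦ (by norm_num [zeta0, eta0])
    (hasIntegralIoi_log_pow_div_mul one_le_two |>.const_mul (2 / 3)
      |>.add (hasIntegralIoi_log_pow_div_pow 2 0 |>.const_mul (-2 / 3))
      |>.add (hasIntegralIoi_log_pow_div_pow 2 1 |>.const_mul (-2 / 3))
      |>.add (hasIntegralIoi_log_pow_div_pow 2 2 |>.const_mul (-8 / 3))
      |>.add (hasIntegralIoi_log_pow_div_pow 1 2 |>.const_mul (-8 / 9))
      |>.add (hasIntegralIoi_log_pow_div_pow 1 1 |>.const_mul (1 / 9))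
      |>.add (hasIntegralIoi_log_pow_div_pow 1 0 |>.const_mul (1 / 9))
      |>.congr (fun s (hs : 0 < s) => ?_) (by norm_num [zeta3]; ring))
  rw [zeta0_sqrt hs.le, eta0_sqrt hs.le]
  field_simp
  ring

theorem stmt11 :
    (∫ t in Set.Ioi (0 : ℝ), psi0 t * zeta0 t * theta0 t) = -61 / 54 ∧
    (∫ t in Set.Ioi (0 : ℝ), psi0 t * zeta0 t ^ 2 * theta0 t) = -223 / 216 ∧
    (∫ t in Set.Ioi (0 : ℝ), psi0 t * eta0 t ^ 2 * theta0 t) = 11 - 8 * zeta3 ∧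
    (∫ t in Set.Ioi (0 : ℝ), psi0 t * eta0 t * zeta0 t * theta0 t)
      = 4 / 3 * zeta3 - 179 / 108 :=
  ⟨integral_psi0_mul_zeta0_mul_theta0, integral_psi0_mul_zeta0_sq_mul_theta0,
    integral_psi0_mul_eta0_sq_mul_theta0, integral_psi0_mul_eta0_mul_zeta0_mul_theta0⟩
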